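/- Let S be a finite set, γ ∈ [0,1), and for each s ∈ S let Δ(s) be the probability simplex over a finite action set A_s and C_s a nonempty set of probability distributions over pairs (p_s, r_s), where p_s assigns to each action a probability vector over S and r_s a reward vector. Define the operator L on ℝ^S by (L v)(s) = max over π_s ∈ Δ(s) of min over μ_s ∈ C_s of E_{(p_s,r_s)∼μ_s}[ Σ_a π_s(a)( r_s(a) + γ Σ_{s'} p_s(s'|a) v(s') ) ]. Then L is a γ-contraction with respect to the supremum norm: ‖L v₁ − L v₂‖_∞ ≤ γ ‖v₁ − v₂‖_∞ for all v₁, v₂ ∈ ℝ^S, provided the max and min are attained. -/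

import Mathlib

/-!
Changing `v` to `v'` changes the integrand `Σ_a π(a) (r(a) + γ Σ_{s'} p(s'|a) v(s'))` by
`γ Σ_a π(a) Σ_{s'} p(s'|a) (v - v')(s')`, a convex combination of values of `γ (v - v')`, hence by
at most `γ ‖v - v'‖` almost surely. Expectations, infima over the ambiguity set and suprema over
policies all preserve such a uniform bound, so it passes to `L v - L v'` at every state.
-/

open MeasureTheory

/-- Expected one-step value at state `s`: `E_{(p,r)∼μ}[ Σ_a π(a) (r(a) + γ Σ_{s'} p(s'|a) v(s')) ]`. -/
noncomputable def expVal {S : Type} [Fintype S] {A : Type} [Fintype A]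
    (γ : ℝ) (v : S → ℝ) (π : A → ℝ)
    (μ : Measure ((A → S → ℝ) × (A → ℝ))) : ℝ :=
  ∫ pr, (∑ a, π a * (pr.2 a + γ * ∑ s', pr.1 a s' * v s')) ∂μ

namespace Real

variable {ι : Type*} {f g : ι → ℝ} {c : ℝ}

lemma iSup_le_iSup_add_of_abs_sub_le (hc : 0 ≤ c) (h : ∀ i, |f i - g i| ≤ c) :
    ⨆ i, f i ≤ (⨆ i, g i) + c := by
  rcases isEmpty_or_nonempty ι with hι | hι
  · simp [hc] -- both suprema are the junk value `0`
  by_cases hg : BddAbove (Set.range g)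
  · exact ciSup_le fun i => by
      linarith [le_ciSup hg i, (abs_le.1 (h i)).2]
  · have hf : ¬BddAbove (Set.range f) := by
      rintro ⟨m, hm⟩
      refine hg ⟨m + c, ?_⟩
      rintro _ ⟨i, rfl⟩
      linarith [hm ⟨i, rfl⟩, (abs_le.1 (h i)).1]
    rw [iSup_of_not_bddAbove hf, iSup_of_not_bddAbove hg]
    linarith

lemma abs_iSup_sub_iSup_le (hc : 0 ≤ c) (h : ∀ i, |f i - g i| ≤ c) :
    |(⨆ i, f i) - ⨆ i, g i| ≤ c := by
  have h' : ∀ i, |g i - f i| ≤ c := fun i => abs_sub_comm (g i) (f i) ▸ h i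
  rw [abs_sub_le_iff]
  constructor <;>
    linarith [iSup_le_iSup_add_of_abs_sub_le hc h, iSup_le_iSup_add_of_abs_sub_le hc h']

lemma iInf_eq_neg_iSup_neg (f : ι → ℝ) : ⨅ i, f i = -⨆ i, -f i := by
  rw [iSup, iInf, ← sInf_neg]
  congr 1
  ext x
  simp [neg_eq_iff_eq_neg]

lemma abs_iInf_sub_iInf_le (hc : 0 ≤ c) (h : ∀ i, |f i - g i| ≤ c) :
    |(⨅ i, f i) - ⨅ i, g i| ≤ c := by
  rw [iInf_eq_neg_iSup_neg f, iInf_eq_neg_iSup_neg g, neg_sub_neg]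
  exact abs_iSup_sub_iSup_le hc fun i => by rw [sub_neg_eq_add, neg_add_eq_sub]; exact h i

end Real

lemma abs_sum_mul_le_of_mem_stdSimplex {ι : Type*} [Fintype ι] {p w : ι → ℝ} {c : ℝ}
    (hp : p ∈ stdSimplex ℝ ι) (hw : ∀ i, |w i| ≤ c) : |∑ i, p i * w i| ≤ c :=
  calc |∑ i, p i * w i|
      ≤ ∑ i, |p i * w i| := Finset.abs_sum_le_sum_abs _ _
    _ ≤ ∑ i, p i * c := Finset.sum_le_sum fun i _ => by
        rw [abs_mul, abs_of_nonneg (hp.1 i)]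
        exact mul_le_mul_of_nonneg_left (hw i) (hp.1 i)
    _ = c := by rw [← Finset.sum_mul, hp.2, one_mul]

section expVal

variable {S A : Type} [Fintype S] [Fintype A] {μ : Measure ((A → S → ℝ) × (A → ℝ))}

lemma integrable_expVal_integrand (hint : Integrable (fun pr => pr) μ) (γ : ℝ) (v : S → ℝ)
    (π : A → ℝ) :
    Integrable (fun pr : (A → S → ℝ) × (A → ℝ) =>
      ∑ a, π a * (pr.2 a + γ * ∑ s', pr.1 a s' * v s')) μ :=
  integrable_finsetSum _ fun a _ =>
    ((hint.snd.eval a).add ((integrable_finsetSum _ fun s' _ =>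
      ((hint.fst.eval a).eval s').mul_const (v s')).const_mul γ)).const_mul (π a)

lemma abs_expVal_sub_expVal_le [IsProbabilityMeasure μ] {γ : ℝ} (hγ : 0 ≤ γ) (v₁ v₂ : S → ℝ)
    {π : A → ℝ} (hπ : π ∈ stdSimplex ℝ A) (hp : ∀ᵐ pr ∂μ, ∀ a, pr.1 a ∈ stdSimplex ℝ S)
    (hint : Integrable (fun pr => pr) μ) :
    |expVal γ v₁ π μ - expVal γ v₂ π μ| ≤ γ * ‖v₁ - v₂‖ := by
  rw [expVal, expVal, ← integral_sub (integrable_expVal_integrand hint γ v₁ π)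
    (integrable_expVal_integrand hint γ v₂ π)]
  rw [← Real.norm_eq_abs]
  refine (norm_integral_le_of_norm_le_const (C := γ * ‖v₁ - v₂‖) ?_).trans_eq (by simp)
  filter_upwards [hp] with pr hpr
  simp_rw [Real.norm_eq_abs, ← Finset.sum_sub_distrib, ← mul_sub]
  refine abs_sum_mul_le_of_mem_stdSimplex hπ fun a => ?_
  have hdiff : pr.2 a + γ * ∑ s', pr.1 a s' * v₁ s' - (pr.2 a + γ * ∑ s', pr.1 a s' * v₂ s') =
      γ * ∑ s', pr.1 a s' * (v₁ - v₂) s' := by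
    simp only [Pi.sub_apply, mul_sub, Finset.sum_sub_distrib]
    ring
  rw [hdiff, abs_mul, abs_of_nonneg hγ]
  exact mul_le_mul_of_nonneg_left (abs_sum_mul_le_of_mem_stdSimplex (hpr a) fun s' => by
    simpa using norm_le_pi_norm (v₁ - v₂) s') hγ

end expVal

theorem stmt_4_general {S : Type} [Fintype S] {A : S → Type} [∀ s, Fintype (A s)]
    (γ : ℝ) (hγ0 : 0 ≤ γ)
    (Cs : ∀ s : S, Set (Measure ((A s → S → ℝ) × (A s → ℝ))))
    (hCprob : ∀ s, ∀ μ ∈ Cs s, IsProbabilityMeasure μ ∧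
        (∀ᵐ pr ∂μ, ∀ a, pr.1 a ∈ stdSimplex ℝ S) ∧
        Integrable (fun pr : (A s → S → ℝ) × (A s → ℝ) => pr) μ)
    (L : (S → ℝ) → (S → ℝ))
    (hL : ∀ v s, L v s =
        ⨆ π : stdSimplex ℝ (A s), ⨅ μ : Cs s, expVal γ v (π : A s → ℝ) (μ : Measure _)) :
    ∀ v₁ v₂ : S → ℝ, ‖L v₁ - L v₂‖ ≤ γ * ‖v₁ - v₂‖ := by
  intro v₁ v₂
  have hc : 0 ≤ γ * ‖v₁ - v₂‖ := by positivity
  refine (pi_norm_le_iff_of_nonneg hc).2 fun s => ?_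
  rw [Pi.sub_apply, Real.norm_eq_abs, hL, hL]
  refine Real.abs_iSup_sub_iSup_le hc fun π => Real.abs_iInf_sub_iInf_le hc fun μ => ?_
  obtain ⟨hprob, hp, hint⟩ := hCprob s μ μ.2
  exact abs_expVal_sub_expVal_le hγ0 v₁ v₂ π.2 hp hint

/-- The distributionally robust Bellman operator
`(L v)(s) = max_{π ∈ Δ(s)} min_{μ ∈ C_s} E_μ[Σ_a π(a)(r(a) + γ Σ_{s'} p(s'|a) v(s'))]`
is a `γ`-contraction in the sup norm on `ℝ^S`, provided the max and min are attained. -/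
theorem stmt_4 {S : Type} [Fintype S] {A : S → Type} [∀ s, Fintype (A s)]
    (γ : ℝ) (hγ0 : 0 ≤ γ) (hγ1 : γ < 1)
    (Cs : ∀ s : S, Set (Measure ((A s → S → ℝ) × (A s → ℝ))))
    (hCne : ∀ s, (Cs s).Nonempty)
    (hCprob : ∀ s, ∀ μ ∈ Cs s, IsProbabilityMeasure μ ∧
        (∀ᵐ pr ∂μ, ∀ a, pr.1 a ∈ stdSimplex ℝ S) ∧
        Integrable (fun pr : (A s → S → ℝ) × (A s → ℝ) => pr) μ)
    (L : (S → ℝ) → (S → ℝ))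
    (hL : ∀ v s, L v s =
        ⨆ π : stdSimplex ℝ (A s), ⨅ μ : Cs s, expVal γ v (π : A s → ℝ) (μ : Measure _))
    (hmin : ∀ (v : S → ℝ) (s : S) (π : stdSimplex ℝ (A s)), ∃ μ : Cs s,
        (⨅ μ' : Cs s, expVal γ v (π : A s → ℝ) (μ' : Measure _)) =
          expVal γ v (π : A s → ℝ) (μ : Measure _))
    (hmax : ∀ (v : S → ℝ) (s : S), ∃ π : stdSimplex ℝ (A s),
        L v s = ⨅ μ : Cs s, expVal γ v (π : A s → ℝ) (μ : Measure _)) :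
    ∀ v₁ v₂ : S → ℝ, ‖L v₁ - L v₂‖ ≤ γ * ‖v₁ - v₂‖ :=
  stmt_4_general γ hγ0 Cs hCprob L hL
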